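/- arXiv:2002.11096 — 2 statements merged into one kernel-verified Lean document; each statement's English description precedes it below -/
import Mathlib

section
/- With infinite observational data and uniform sampling: in the stratified sampling model with allocation (x_1, x_2, x_3, x_4) = (1/4, 1/4, 1/4, 1/4), suppose 0 < ε ≤ 1, 0 < δ < 1, m/4 is a positive integer, and p_3+p_7 > 0, p_4+p_8 > 0, p_1+p_5 > 0, p_2+p_6 > 0. If m ≥ (18 ln(8/δ)/ε²) · max( 4(a_2²+a_4²)/min((p_3+p_7)², (p_4+p_8)²), 4(a_1²+a_3²)/min((p_1+p_5)², (p_2+p_6)²) ), then P(|ATE-hat − ATE(p_1,...,p_8)| ≥ ε) < δ. -/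
/-!
On the event that every stratum frequency `q̂ j` lies within `s` of `q j`, every cell of
`pOf a q̂` moves by at most `s` times the largest weight `a j` of its treatment arm. Writing the
ATE as the `P(Z = 0)`-weighted mixture of differences of the ratios `P(Y = 1 | T, Z)`, each ratio
then moves by at most `5ε'/18` and `P(Z = 0)` by at most `ε'/6`, so the ATE moves by at most
`8ε'/9`. Taking `ε' = 11ε/10` and `9 C s² = ε'²`, with `C` the constant of the sample-size bound,
makes this `< ε`, while Hoeffding's inequality bounds each of the four deviation events by
`2 exp (-2 (m/4) s²) < δ/4`; a union bound finishes.
-/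

open MeasureTheory ProbabilityTheory

/-- The average treatment effect as a function of the joint distribution
`p : Fin 8 → ℝ`, where `p i` here is `p_{i+1}` in the paper. -/
noncomputable def ATE (p : Fin 8 → ℝ) : ℝ :=
  p 6 * (p 0 + p 2 + p 4 + p 6) / (p 6 + p 2)
    + p 7 * (1 - p 0 - p 2 - p 4 - p 6) / (p 7 + p 3)
    - p 4 * (p 0 + p 2 + p 4 + p 6) / (p 4 + p 0)
    - p 5 * (1 - p 0 - p 2 - p 4 - p 6) / (p 5 + p 1)

/-- The joint distribution `p` of `(Y,T,Z)` obtained from the observational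
distribution `a` of `(Y,T)` and the conditional probabilities
`q j = P(Z=0 | (Y,T) = j-th outcome)`. -/
noncomputable def pOf (a q : Fin 4 → ℝ) : Fin 8 → ℝ :=
  ![a 0 * q 0, a 0 * (1 - q 0), a 1 * q 1, a 1 * (1 - q 1),
    a 2 * q 2, a 2 * (1 - q 2), a 3 * q 3, a 3 * (1 - q 3)]

open Real Finset
open scoped NNReal

section Hoeffding

variable {Ω : Type*} [MeasurableSpace Ω] {μ : Measure Ω}

lemma measureReal_le_abs_sum_le [IsProbabilityMeasure μ] {ι : Type*} {X : ι → Ω → ℝ}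
    (h_indep : iIndepFun X μ) {c : ι → ℝ≥0} {s : Finset ι}
    (h_subG : ∀ i ∈ s, HasSubgaussianMGF (X i) (c i) μ) {ε : ℝ} (hε : 0 ≤ ε) :
    μ.real {ω | ε ≤ |∑ i ∈ s, X i ω|} ≤ 2 * exp (-ε ^ 2 / (2 * ∑ i ∈ s, c i)) := by
  have hpos := HasSubgaussianMGF.measure_sum_ge_le_of_iIndepFun h_indep h_subG hε
  have hneg := HasSubgaussianMGF.measure_sum_ge_le_of_iIndepFun (X := fun i => -X i)
    (h_indep.comp (fun _ => Neg.neg) fun _ => measurable_neg) (fun i hi => (h_subG i hi).neg) hε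
  calc μ.real {ω | ε ≤ |∑ i ∈ s, X i ω|}
      ≤ μ.real ({ω | ε ≤ ∑ i ∈ s, X i ω} ∪ {ω | ε ≤ ∑ i ∈ s, (-X i) ω}) := by
        refine measureReal_mono fun ω hω => ?_
        simpa [le_abs] using hω
    _ ≤ _ := measureReal_union_le _ _
    _ ≤ _ := by linarith

lemma hasSubgaussianMGF_ite_sub [IsProbabilityMeasure μ] {V : Ω → Bool} (hV : Measurable V)
    {p : ℝ} (hp : 0 ≤ p) (hd : μ {ω | V ω = true} = ENNReal.ofReal p) :
    HasSubgaussianMGF (fun ω => (if V ω then 1 else 0) - p) (1 / 4) μ := by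
  have hmean : μ[fun ω => if V ω then (1 : ℝ) else 0] = p := by
    have hA : MeasurableSet {ω | V ω = true} := hV (measurableSet_singleton true)
    calc μ[fun ω => if V ω then (1 : ℝ) else 0] = ∫ ω, {ω | V ω = true}.indicator 1 ω ∂μ := by
          congr 1 with ω
          by_cases h : V ω <;> simp [h]
      _ = p := by rw [integral_indicator_one hA, measureReal_def, hd, ENNReal.toReal_ofReal hp]
  have := hasSubgaussianMGF_of_mem_Icc (μ := μ) (a := 0) (b := 1)
    (X := fun ω => if V ω then (1 : ℝ) else 0)
    ((Measurable.of_discrete (f := fun b : Bool => if b then (1 : ℝ) else 0)).comp hV).aemeasurable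
    (ae_of_all _ fun ω => show (if V ω then (1 : ℝ) else 0) ∈ Set.Icc 0 1 by split <;> simp)
  rw [hmean] at this
  convert this
  norm_num

lemma measureReal_le_abs_card_filter_div_sub_le [IsProbabilityMeasure μ] {N : ℕ}
    {V : Fin N → Ω → Bool} (hV : ∀ i, Measurable (V i)) (hind : iIndepFun V μ) {p : ℝ}
    (hp : 0 ≤ p) (hd : ∀ i, μ {ω | V i ω = true} = ENNReal.ofReal p) {t : ℝ} (ht : 0 ≤ t) :
    μ.real {ω | t ≤ |(#{i | V i ω = true} : ℝ) / N - p|} ≤ 2 * exp (-2 * N * t ^ 2) := by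
  rcases N.eq_zero_or_pos with rfl | hN
  · simpa using (measureReal_le_one (μ := μ)).trans one_le_two
  have hN' : (0 : ℝ) < N := by exact_mod_cast hN
  have key := measureReal_le_abs_sum_le (s := univ)
    (hind.comp (fun _ b => (if b then (1 : ℝ) else 0) - p) fun _ => .of_discrete)
    (fun i _ => hasSubgaussianMGF_ite_sub (hV i) hp (hd i)) (mul_nonneg hN'.le ht)
  have hsum ω : ∑ i, ((if V i ω then (1 : ℝ) else 0) - p)
      = N * ((#{i | V i ω = true} : ℝ) / N - p) := by
    rw [sum_sub_distrib, sum_boole, sum_const, card_univ, Fintype.card_fin, nsmul_eq_mul]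
    field_simp
  calc μ.real {ω | t ≤ |(#{i | V i ω = true} : ℝ) / N - p|}
      ≤ μ.real {ω | N * t ≤ |∑ i, ((if V i ω then (1 : ℝ) else 0) - p)|} := by
        refine measureReal_mono fun ω hω => ?_
        simp only [Set.mem_ofPred_eq, hsum, abs_mul, abs_of_pos hN'] at hω ⊢
        exact mul_le_mul_of_nonneg_left hω hN'.le
    _ ≤ 2 * exp (-2 * N * t ^ 2) := by
        refine key.trans_eq ?_
        rw [sum_const, card_univ, Fintype.card_fin, nsmul_eq_mul]
        push_cast
        congr 2
        field_simp
        ring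

lemma measure_lt_ofReal_of_subset_iUnion [IsFiniteMeasure μ] {ι : Type*} [Fintype ι]
    [Nonempty ι] {A : Set Ω} {B : ι → Set Ω} (hAB : A ⊆ ⋃ i, B i) {δ : ℝ}
    (hB : ∀ i, μ.real (B i) < δ / Fintype.card ι) :
    μ A < ENNReal.ofReal δ := by
  have hδ : 0 < δ := by
    have := measureReal_nonneg.trans_lt (hB (Classical.arbitrary ι))
    exact (div_pos_iff_of_pos_right (by exact_mod_cast Fintype.card_pos)).1 this
  rw [← ofReal_measureReal, ENNReal.ofReal_lt_ofReal_iff hδ]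
  calc μ.real A ≤ μ.real (⋃ i, B i) := measureReal_mono hAB
    _ ≤ ∑ i, μ.real (B i) := measureReal_iUnion_fintype_le _
    _ < ∑ _i : ι, δ / Fintype.card ι := sum_lt_sum_of_nonempty univ_nonempty fun i _ => hB i
    _ = δ := by
        rw [sum_const, card_univ, nsmul_eq_mul]
        field_simp

end Hoeffding

section Perturbation

lemma abs_div_add_sub_div_add_le {c d c' d' M : ℝ} (hc : 0 ≤ c) (hd : 0 ≤ d)
    (hc' : |c' - c| ≤ M) (hd' : |d' - d| ≤ M) (hM : 2 * M < c + d) :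
    |c' / (c' + d') - c / (c + d)| ≤ M / (c + d - 2 * M) := by
  obtain ⟨hc₁, hc₂⟩ := abs_le.mp hc'
  obtain ⟨hd₁, hd₂⟩ := abs_le.mp hd'
  have hM₀ : 0 ≤ M := (abs_nonneg _).trans hc'
  have hb : 0 < c + d - 2 * M := by linarith
  have hb' : c + d - 2 * M ≤ c' + d' := by linarith
  have hcd : 0 < c + d := by linarith
  have hcd' : 0 < c' + d' := by linarith
  have hnum : |(c' - c) * d - (d' - d) * c| ≤ M * (c + d) := by
    calc _ ≤ |(c' - c) * d| + |(d' - d) * c| := abs_sub _ _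
      _ ≤ M * d + M * c := by
          rw [abs_mul, abs_mul, abs_of_nonneg hc, abs_of_nonneg hd]; gcongr
      _ = M * (c + d) := by ring
  have hdiff : c' / (c' + d') - c / (c + d)
      = ((c' - c) * d - (d' - d) * c) / ((c' + d') * (c + d)) := by
    field_simp
    ring
  rw [hdiff, abs_div, abs_of_pos (mul_pos hcd' hcd), div_le_div_iff₀ (mul_pos hcd' hcd) hb]
  calc _ ≤ M * (c + d) * (c + d - 2 * M) := by gcongr
    _ ≤ M * (c + d) * (c' + d') := by gcongr
    _ = M * ((c' + d') * (c + d)) := by ring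

lemma abs_div_add_sub_div_add_le_of_six_mul_le {c d c' d' M ε : ℝ} (hc : 0 ≤ c) (hd : 0 ≤ d)
    (hc' : |c' - c| ≤ M) (hd' : |d' - d| ≤ M) (hb : 0 < c + d) (hM : 6 * M ≤ ε * (c + d))
    (hε : ε ≤ 6 / 5) :
    |c' / (c' + d') - c / (c + d)| ≤ 5 / 18 * ε := by
  have hM₀ : 0 ≤ M := (abs_nonneg _).trans hc'
  have h5M : 5 * M ≤ c + d := by nlinarith
  refine (abs_div_add_sub_div_add_le hc hd hc' hd' (by linarith)).trans ?_
  rw [div_le_iff₀ (by linarith)]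
  nlinarith

lemma div_add_mem_Icc {c d : ℝ} (hc : 0 ≤ c) (hd : 0 ≤ d) : c / (c + d) ∈ Set.Icc 0 1 :=
  ⟨by positivity, div_le_one_of_le₀ (le_add_of_nonneg_right hd) (add_nonneg hc hd)⟩

lemma abs_sub_sub_sub_le (a a' b b' : ℝ) : |(a' - b') - (a - b)| ≤ |a' - a| + |b' - b| := by
  rw [show (a' - b') - (a - b) = (a' - a) - (b' - b) by ring]
  exact abs_sub _ _

lemma abs_mix_sub_mix_le {S S' u u' v v' : ℝ} (hS₀ : 0 ≤ S) (hS₁ : S ≤ 1) :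
    |(S' * u' + (1 - S') * v') - (S * u + (1 - S) * v)|
      ≤ S * |u' - u| + (1 - S) * |v' - v| + |S' - S| * |u' - v'| := by
  have h : (S' * u' + (1 - S') * v') - (S * u + (1 - S) * v)
      = S * (u' - u) + (1 - S) * (v' - v) + (S' - S) * (u' - v') := by ring
  rw [h]
  refine (abs_add_three _ _ _).trans_eq ?_
  rw [abs_mul, abs_mul, abs_mul, abs_of_nonneg hS₀, abs_of_nonneg (sub_nonneg.2 hS₁)]

lemma ATE_eq_mix (p : Fin 8 → ℝ) :
    ATE p = (p 0 + p 2 + p 4 + p 6) * (p 6 / (p 6 + p 2) - p 4 / (p 4 + p 0))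
      + (1 - (p 0 + p 2 + p 4 + p 6)) * (p 7 / (p 7 + p 3) - p 5 / (p 5 + p 1)) := by
  unfold ATE
  ring

lemma abs_ATE_sub_ATE_le {p p' : Fin 8 → ℝ} {ε M₀ M₁ : ℝ} (hp : ∀ k, 0 ≤ p k)
    (hp' : ∀ k, 0 ≤ p' k) (hsum : ∑ k, p k = 1)
    (h₀ : ∀ k ∈ ({0, 1, 4, 5} : Finset (Fin 8)), |p' k - p k| ≤ M₀)
    (h₁ : ∀ k ∈ ({2, 3, 6, 7} : Finset (Fin 8)), |p' k - p k| ≤ M₁)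
    (hb₀ : 0 < min (p 0 + p 4) (p 1 + p 5)) (hb₁ : 0 < min (p 2 + p 6) (p 3 + p 7))
    (hM₀ : 6 * M₀ ≤ ε * min (p 0 + p 4) (p 1 + p 5))
    (hM₁ : 6 * M₁ ≤ ε * min (p 2 + p 6) (p 3 + p 7)) (hε₀ : 0 ≤ ε) (hε : ε ≤ 6 / 5) :
    |ATE p' - ATE p| ≤ 8 / 9 * ε := by
  rw [Fin.sum_univ_eight] at hsum
  have hM₀₄ := hM₀.trans (mul_le_mul_of_nonneg_left (min_le_left _ _) hε₀)
  have hM₀₅ := hM₀.trans (mul_le_mul_of_nonneg_left (min_le_right _ _) hε₀)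
  have hM₁₆ := hM₁.trans (mul_le_mul_of_nonneg_left (min_le_left _ _) hε₀)
  have hM₁₇ := hM₁.trans (mul_le_mul_of_nonneg_left (min_le_right _ _) hε₀)
  have hr₆ := abs_div_add_sub_div_add_le_of_six_mul_le (hp 6) (hp 2) (h₁ 6 (by simp))
    (h₁ 2 (by simp)) (by linarith [min_le_left (p 2 + p 6) (p 3 + p 7)]) (by linarith) hε
  have hr₇ := abs_div_add_sub_div_add_le_of_six_mul_le (hp 7) (hp 3) (h₁ 7 (by simp))
    (h₁ 3 (by simp)) (by linarith [min_le_right (p 2 + p 6) (p 3 + p 7)]) (by linarith) hε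
  have hr₄ := abs_div_add_sub_div_add_le_of_six_mul_le (hp 4) (hp 0) (h₀ 4 (by simp))
    (h₀ 0 (by simp)) (by linarith [min_le_left (p 0 + p 4) (p 1 + p 5)]) (by linarith) hε
  have hr₅ := abs_div_add_sub_div_add_le_of_six_mul_le (hp 5) (hp 1) (h₀ 5 (by simp))
    (h₀ 1 (by simp)) (by linarith [min_le_right (p 0 + p 4) (p 1 + p 5)]) (by linarith) hε
  have hS : |(p' 0 + p' 2 + p' 4 + p' 6) - (p 0 + p 2 + p 4 + p 6)| ≤ ε / 6 := by
    obtain ⟨d₀, d₀'⟩ := abs_le.mp (h₀ 0 (by simp))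
    obtain ⟨d₂, d₂'⟩ := abs_le.mp (h₁ 2 (by simp))
    obtain ⟨d₄, d₄'⟩ := abs_le.mp (h₀ 4 (by simp))
    obtain ⟨d₆, d₆'⟩ := abs_le.mp (h₁ 6 (by simp))
    have hε₁ : ε * (p 0 + p 1 + p 2 + p 3 + p 4 + p 5 + p 6 + p 7) = ε := by rw [hsum, mul_one]
    exact abs_le.mpr ⟨by linarith, by linarith⟩
  have hu'v' : |(p' 6 / (p' 6 + p' 2) - p' 4 / (p' 4 + p' 0))
      - (p' 7 / (p' 7 + p' 3) - p' 5 / (p' 5 + p' 1))| ≤ 2 := by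
    have r₆ := div_add_mem_Icc (hp' 6) (hp' 2)
    have r₇ := div_add_mem_Icc (hp' 7) (hp' 3)
    have r₄ := div_add_mem_Icc (hp' 4) (hp' 0)
    have r₅ := div_add_mem_Icc (hp' 5) (hp' 1)
    exact abs_le.mpr ⟨by linarith [r₆.1, r₇.2, r₄.2, r₅.1], by linarith [r₆.2, r₇.1, r₄.1, r₅.2]⟩
  have hS₀ : 0 ≤ p 0 + p 2 + p 4 + p 6 := by linarith [hp 0, hp 2, hp 4, hp 6]
  have hS₁ : p 0 + p 2 + p 4 + p 6 ≤ 1 := by linarith [hp 1, hp 3, hp 5, hp 7]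
  rw [ATE_eq_mix, ATE_eq_mix]
  refine (abs_mix_sub_mix_le hS₀ hS₁).trans ?_
  calc _ ≤ (p 0 + p 2 + p 4 + p 6) * (5 / 9 * ε) + (1 - (p 0 + p 2 + p 4 + p 6)) * (5 / 9 * ε)
        + ε / 6 * 2 := by
        gcongr
        · exact (abs_sub_sub_sub_le _ _ _ _).trans (by linarith)
        · exact (abs_sub_sub_sub_le _ _ _ _).trans (by linarith)
    _ = 8 / 9 * ε := by ring

end Perturbation

section pOf

variable {a q q' : Fin 4 → ℝ}

lemma pOf_nonneg (ha : ∀ j, 0 ≤ a j) (hq₀ : ∀ j, 0 ≤ q j) (hq₁ : ∀ j, q j ≤ 1) (k : Fin 8) :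
    0 ≤ pOf a q k := by
  have h₀ j := mul_nonneg (ha j) (hq₀ j)
  have h₁ j := mul_nonneg (ha j) (sub_nonneg.2 (hq₁ j))
  fin_cases k
  exacts [h₀ 0, h₁ 0, h₀ 1, h₁ 1, h₀ 2, h₁ 2, h₀ 3, h₁ 3]

lemma sum_pOf (a q : Fin 4 → ℝ) : ∑ k, pOf a q k = ∑ j, a j := by
  simp only [pOf, Fin.sum_univ_eight, Fin.sum_univ_four, Matrix.cons_val_zero,
    Matrix.cons_val_one, Matrix.cons_val]
  ring

lemma abs_pOf_sub_pOf_le (ha : ∀ j, 0 ≤ a j) {s : ℝ} (hs : ∀ j, |q' j - q j| ≤ s) :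
    (∀ k ∈ ({0, 1, 4, 5} : Finset (Fin 8)), |pOf a q' k - pOf a q k| ≤ max (a 0) (a 2) * s) ∧
    (∀ k ∈ ({2, 3, 6, 7} : Finset (Fin 8)), |pOf a q' k - pOf a q k| ≤ max (a 1) (a 3) * s) := by
  have h₀ j : |a j * q' j - a j * q j| ≤ a j * s := by
    rw [← mul_sub, abs_mul, abs_of_nonneg (ha j)]
    exact mul_le_mul_of_nonneg_left (hs j) (ha j)
  have h₁ j : |a j * (1 - q' j) - a j * (1 - q j)| ≤ a j * s := by
    rw [← mul_sub, sub_sub_sub_cancel_left, abs_mul, abs_of_nonneg (ha j), abs_sub_comm]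
    exact mul_le_mul_of_nonneg_left (hs j) (ha j)
  have hs₀ : 0 ≤ s := (abs_nonneg _).trans (hs 0)
  have le₀ := mul_le_mul_of_nonneg_right (le_max_left (a 0) (a 2)) hs₀
  have le₂ := mul_le_mul_of_nonneg_right (le_max_right (a 0) (a 2)) hs₀
  have le₁ := mul_le_mul_of_nonneg_right (le_max_left (a 1) (a 3)) hs₀
  have le₃ := mul_le_mul_of_nonneg_right (le_max_right (a 1) (a 3)) hs₀
  constructor
  · simp only [mem_insert, mem_singleton]
    rintro k (rfl | rfl | rfl | rfl)
    exacts [(h₀ 0).trans le₀, (h₁ 0).trans le₀, (h₀ 2).trans le₂, (h₁ 2).trans le₂]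
  · simp only [mem_insert, mem_singleton]
    rintro k (rfl | rfl | rfl | rfl)
    exacts [(h₀ 1).trans le₁, (h₁ 1).trans le₁, (h₀ 3).trans le₃, (h₁ 3).trans le₃]

lemma six_mul_max_mul_le {x y b b' C s ε : ℝ} (hx : 0 ≤ x) (hb : 0 < b) (hb' : 0 < b')
    (hs : 0 ≤ s) (hε : 0 ≤ ε) (hC : 4 * (x ^ 2 + y ^ 2) / min (b ^ 2) (b' ^ 2) ≤ C)
    (hsC : 9 * C * s ^ 2 ≤ ε ^ 2) :
    6 * (max x y * s) ≤ ε * min b b' := by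
  have hmin : min (b ^ 2) (b' ^ 2) = min b b' ^ 2 := by
    rcases le_total b b' with h | h
    · rw [min_eq_left h, min_eq_left (pow_le_pow_left₀ hb.le h 2)]
    · rw [min_eq_right h, min_eq_right (pow_le_pow_left₀ hb'.le h 2)]
  have hmax : max x y ^ 2 ≤ x ^ 2 + y ^ 2 := by
    rcases le_total x y with h | h
    · rw [max_eq_right h]; nlinarith
    · rw [max_eq_left h]; nlinarith
  rw [hmin, div_le_iff₀ (pow_pos (lt_min hb hb') 2)] at hC
  refine (pow_le_pow_iff_left₀ (by positivity) (by positivity) two_ne_zero).1 ?_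
  calc (6 * (max x y * s)) ^ 2 = 9 * (4 * max x y ^ 2) * s ^ 2 := by ring
    _ ≤ 9 * (4 * (x ^ 2 + y ^ 2)) * s ^ 2 := by gcongr
    _ ≤ 9 * (C * min b b' ^ 2) * s ^ 2 := by gcongr
    _ = 9 * C * s ^ 2 * min b b' ^ 2 := by ring
    _ ≤ ε ^ 2 * min b b' ^ 2 := by gcongr
    _ = (ε * min b b') ^ 2 := by ring

lemma sq_add_sq_pos_of_mul_add_mul_pos {x y u v : ℝ} (h : 0 < x * u + y * v) :
    0 < x ^ 2 + y ^ 2 := by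
  rcases eq_or_ne x 0 with rfl | hx
  · have hy : y ≠ 0 := by rintro rfl; simp at h
    positivity
  · positivity

noncomputable def uniformSamplingConst (a q : Fin 4 → ℝ) : ℝ :=
  max (4 * ((a 1) ^ 2 + (a 3) ^ 2) /
        min ((pOf a q 2 + pOf a q 6) ^ 2) ((pOf a q 3 + pOf a q 7) ^ 2))
      (4 * ((a 0) ^ 2 + (a 2) ^ 2) /
        min ((pOf a q 0 + pOf a q 4) ^ 2) ((pOf a q 1 + pOf a q 5) ^ 2))

lemma uniformSamplingConst_pos (h37 : 0 < pOf a q 2 + pOf a q 6)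
    (h48 : 0 < pOf a q 3 + pOf a q 7) : 0 < uniformSamplingConst a q :=
  lt_max_of_lt_left <| div_pos
    (mul_pos four_pos (sq_add_sq_pos_of_mul_add_mul_pos (u := q 1) (v := q 3) h37))
    (lt_min (pow_pos h37 2) (pow_pos h48 2))

lemma abs_ATE_pOf_sub_le {s ε : ℝ} (ha : ∀ j, 0 ≤ a j) (hasum : ∑ j, a j = 1)
    (hq₀ : ∀ j, 0 ≤ q j) (hq₁ : ∀ j, q j ≤ 1) (hq'₀ : ∀ j, 0 ≤ q' j) (hq'₁ : ∀ j, q' j ≤ 1)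
    (h37 : 0 < pOf a q 2 + pOf a q 6) (h48 : 0 < pOf a q 3 + pOf a q 7)
    (h15 : 0 < pOf a q 0 + pOf a q 4) (h26 : 0 < pOf a q 1 + pOf a q 5)
    (hε₀ : 0 ≤ ε) (hε : ε ≤ 6 / 5) (hs : ∀ j, |q' j - q j| ≤ s)
    (hsC : 9 * uniformSamplingConst a q * s ^ 2 ≤ ε ^ 2) :
    |ATE (pOf a q') - ATE (pOf a q)| ≤ 8 / 9 * ε := by
  obtain ⟨h₀, h₁⟩ := abs_pOf_sub_pOf_le ha hs
  have hs₀ : 0 ≤ s := (abs_nonneg _).trans (hs 0)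
  exact abs_ATE_sub_ATE_le (pOf_nonneg ha hq₀ hq₁) (pOf_nonneg ha hq'₀ hq'₁)
    (by rw [sum_pOf, hasum]) h₀ h₁ (lt_min h15 h26) (lt_min h37 h48)
    (six_mul_max_mul_le (ha 0) h15 h26 hs₀ hε₀ (le_max_right _ _) hsC)
    (six_mul_max_mul_le (ha 1) h37 h48 hs₀ hε₀ (le_max_left _ _) hsC) hε₀ hε

end pOf

lemma card_filter_div_le_one {N : ℕ} (P : Fin N → Prop) [DecidablePred P] :
    (#{i | P i} : ℝ) / N ≤ 1 :=
  div_le_one_of_le₀ (mod_cast (card_le_univ _).trans_eq (Fintype.card_fin N)) N.cast_nonneg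

lemma two_mul_exp_neg_lt_of_sample_size {δ ε C m s : ℝ} (hδ₀ : 0 < δ) (hδ₈ : δ < 8)
    (hε : 0 < ε) (hsC : 9 * C * s ^ 2 = (11 / 10 * ε) ^ 2)
    (hm : m ≥ 18 * log (8 / δ) / ε ^ 2 * C) :
    2 * exp (-2 * (1 / 4 * m) * s ^ 2) < δ / 4 := by
  have hL : 0 < log (8 / δ) := log_pos ((one_lt_div hδ₀).2 hδ₈)
  have hCs : C * s ^ 2 = 121 / 900 * ε ^ 2 := by linarith
  have hexp : log (8 / δ) < 2 * (1 / 4 * m) * s ^ 2 :=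
    calc log (8 / δ) < 121 / 100 * log (8 / δ) := by linarith
      _ = 18 * log (8 / δ) / ε ^ 2 * C * s ^ 2 / 2 := by
          rw [mul_assoc (18 * log (8 / δ) / ε ^ 2), hCs]
          field_simp
          ring
      _ ≤ m * s ^ 2 / 2 := by gcongr
      _ = 2 * (1 / 4 * m) * s ^ 2 := by ring
  calc 2 * exp (-2 * (1 / 4 * m) * s ^ 2) < 2 * exp (-log (8 / δ)) := by gcongr; linarith
    _ = δ / 4 := by
        rw [exp_neg, exp_log (by positivity), inv_div]
        ring

theorem ate_sample_complexity_sampling_uniformly_general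
    {Ω : Type*} [MeasurableSpace Ω] (μ : Measure Ω) [IsProbabilityMeasure μ]
    (a q : Fin 4 → ℝ) (ha : ∀ j, 0 ≤ a j) (hasum : ∑ j, a j = 1)
    (hq0 : ∀ j, 0 ≤ q j) (hq1 : ∀ j, q j ≤ 1)
    (m : ℕ) (n : Fin 4 → ℕ)
    -- uniform allocation: `n j = x j * m` with `x j = 1/4`
    (halloc : ∀ j, (n j : ℝ) = (1 / 4 : ℝ) * m)
    (W : (j : Fin 4) → Fin (n j) → Ω → Bool)
    (hWmeas : ∀ j i, Measurable (W j i))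
    (hindep : iIndepFun
      (fun k : Σ j : Fin 4, Fin (n j) => W k.1 k.2) μ)
    (hdist : ∀ j i, μ {ω | W j i ω = true} = ENNReal.ofReal (q j))
    (ε δ : ℝ) (hε0 : 0 < ε) (hε1 : ε ≤ 1) (hδ0 : 0 < δ) (hδ1 : δ < 1)
    (h37 : 0 < pOf a q 2 + pOf a q 6) (h48 : 0 < pOf a q 3 + pOf a q 7)
    (h15 : 0 < pOf a q 0 + pOf a q 4) (h26 : 0 < pOf a q 1 + pOf a q 5)
    (hm : (m : ℝ) ≥ 18 * Real.log (8 / δ) / ε ^ 2 *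
      max (4 * ((a 1) ^ 2 + (a 3) ^ 2) /
            min ((pOf a q 2 + pOf a q 6) ^ 2) ((pOf a q 3 + pOf a q 7) ^ 2))
          (4 * ((a 0) ^ 2 + (a 2) ^ 2) /
            min ((pOf a q 0 + pOf a q 4) ^ 2) ((pOf a q 1 + pOf a q 5) ^ 2))) :
    μ {ω | ε ≤
        |ATE (pOf a (fun j =>
            ((Finset.univ.filter fun i => W j i ω = true).card : ℝ) / n j)) -
          ATE (pOf a q)|}
      < ENNReal.ofReal δ := by
  set freq : Ω → Fin 4 → ℝ := fun ω j => (#{i | W j i ω = true} : ℝ) / n j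
  have hC := uniformSamplingConst_pos h37 h48
  obtain ⟨s, hs₀, hsC⟩ : ∃ s, 0 ≤ s ∧ 9 * uniformSamplingConst a q * s ^ 2 = (11 / 10 * ε) ^ 2 :=
    ⟨√((11 / 10 * ε) ^ 2 / (9 * uniformSamplingConst a q)), sqrt_nonneg _, by
      rw [sq_sqrt (by positivity)]
      field_simp⟩
  refine measure_lt_ofReal_of_subset_iUnion (B := fun j => {ω | s ≤ |freq ω j - q j|})
    (fun ω hω => ?_) fun j => ?_
  · by_contra h
    simp only [Set.mem_iUnion, Set.mem_ofPred_eq, not_exists, not_le] at h hω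
    have := abs_ATE_pOf_sub_le ha hasum hq0 hq1 (fun j => by positivity)
      (fun j => card_filter_div_le_one _) h37 h48 h15 h26 (by positivity) (by linarith)
      (fun j => (h j).le) hsC.le
    linarith
  · refine (measureReal_le_abs_card_filter_div_sub_le (hWmeas j)
      (hindep.precomp (g := Sigma.mk j) sigma_mk_injective) (hq0 j) (hdist j) hs₀).trans_lt ?_
    rw [halloc j, Fintype.card_fin, Nat.cast_ofNat]
    exact two_mul_exp_neg_lt_of_sample_size hδ0 (by linarith) hε0 hsC hm

/-- Sample complexity for estimating the ATE with infinite observational data,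
sampling the experimental data uniformly,
i.e. `(x_1,x_2,x_3,x_4) = (1/4,1/4,1/4,1/4)` (Theorem 2, second bullet). -/
theorem ate_sample_complexity_sampling_uniformly
    {Ω : Type*} [MeasurableSpace Ω] (μ : Measure Ω) [IsProbabilityMeasure μ]
    (a q : Fin 4 → ℝ) (ha : ∀ j, 0 ≤ a j) (hasum : ∑ j, a j = 1)
    (hq0 : ∀ j, 0 ≤ q j) (hq1 : ∀ j, q j ≤ 1)
    (m : ℕ) (n : Fin 4 → ℕ) (hn : ∀ j, 0 < n j)
    -- uniform allocation: `n j = x j * m` with `x j = 1/4`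
    (halloc : ∀ j, (n j : ℝ) = (1 / 4 : ℝ) * m)
    (W : (j : Fin 4) → Fin (n j) → Ω → Bool)
    (hWmeas : ∀ j i, Measurable (W j i))
    (hindep : iIndepFun
      (fun k : Σ j : Fin 4, Fin (n j) => W k.1 k.2) μ)
    (hdist : ∀ j i, μ {ω | W j i ω = true} = ENNReal.ofReal (q j))
    (ε δ : ℝ) (hε0 : 0 < ε) (hε1 : ε ≤ 1) (hδ0 : 0 < δ) (hδ1 : δ < 1)
    (h37 : 0 < pOf a q 2 + pOf a q 6) (h48 : 0 < pOf a q 3 + pOf a q 7)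
    (h15 : 0 < pOf a q 0 + pOf a q 4) (h26 : 0 < pOf a q 1 + pOf a q 5)
    (hm : (m : ℝ) ≥ 18 * Real.log (8 / δ) / ε ^ 2 *
      max (4 * ((a 1) ^ 2 + (a 3) ^ 2) /
            min ((pOf a q 2 + pOf a q 6) ^ 2) ((pOf a q 3 + pOf a q 7) ^ 2))
          (4 * ((a 0) ^ 2 + (a 2) ^ 2) /
            min ((pOf a q 0 + pOf a q 4) ^ 2) ((pOf a q 1 + pOf a q 5) ^ 2))) :
    μ {ω | ε ≤
        |ATE (pOf a (fun j =>
            ((Finset.univ.filter fun i => W j i ω = true).card : ℝ) / n j)) -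
          ATE (pOf a q)|}
      < ENNReal.ofReal δ :=
  ate_sample_complexity_sampling_uniformly_general μ a q ha hasum hq0 hq1 m n halloc W hWmeas hindep
    hdist ε δ hε0 hε1 hδ0 hδ1 h37 h48 h15 h26 hm
end

section
/- With infinite observational data and sampling according to a predefined ratio: in the stratified sampling model with allocation (x_1, x_2, x_3, x_4) = (a_1/(2(a_1+a_3)), a_2/(2(a_2+a_4)), a_3/(2(a_1+a_3)), a_4/(2(a_2+a_4))) (assuming a_1+a_3 > 0 and a_2+a_4 > 0), suppose 0 < ε ≤ 1, 0 < δ < 1, each x_j·m is a positive integer, and p_3+p_7 > 0, p_4+p_8 > 0, p_1+p_5 > 0, p_2+p_6 > 0. If m ≥ (18 ln(8/δ)/ε²) · max( 2(a_2+a_4)²/min((p_3+p_7)², (p_4+p_8)²), 2(a_1+a_3)²/min((p_1+p_5)², (p_2+p_6)²) ), then P(|ATE-hat − ATE(p_1,...,p_8)| ≥ ε) < δ. -/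
/-!
By Hoeffding's inequality, `|q̂_j - q_j| < t_j := √(κ / n_j)` fails with probability at most
`2 exp(-2κ)`; for `κ = (9/16) log(8/δ)` the eight tails add up to less than `δ`.

On the good event the estimate is deterministic. The ATE is the difference of the two adjustment
formulas `∑_z P(Y = 1 | T = t, Z = z) P(Z = z)`. A ratio `u / (u + v)` moves by at most `ε / 3`
when `|Δu| + |Δv| ≤ (ε / 4) (u + v)`, so each adjustment formula moves by at most
`ε / 3 + |ΔP(Z = 0)| ≤ ε / 3 + ε / 8`, and the ATE by at most `11 ε / 12`. This needs
`∑_{j ∈ arm t} a_j t_j ≤ (ε / 4) min_z P(T = t, Z = z)`; sampling within each arm proportionally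
to `a_j` makes the left side at most `2 P(T = t) √(κ / m)`, and the bound on `m` gives the rest.
-/

open MeasureTheory ProbabilityTheory

noncomputable def empiricalFreq {N : ℕ} (X : Fin N → Bool) : ℝ :=
  ((Finset.univ.filter fun i => X i = true).card : ℝ) / N

lemma empiricalFreq_mem_Icc {N : ℕ} (X : Fin N → Bool) : empiricalFreq X ∈ Set.Icc 0 1 := by
  refine ⟨by unfold empiricalFreq; positivity, div_le_one_of_le₀ ?_ N.cast_nonneg⟩
  exact_mod_cast (Finset.card_filter_le _ _).trans_eq (Finset.card_fin N)

section Hoeffding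

open Real

lemma ProbabilityTheory.HasSubgaussianMGF.measureReal_abs_ge_le {Ω : Type*}
    [MeasurableSpace Ω] {μ : Measure Ω} [IsFiniteMeasure μ] {X : Ω → ℝ} {c : NNReal}
    (h : HasSubgaussianMGF X c μ) {ε : ℝ} (hε : 0 ≤ ε) :
    μ.real {ω | ε ≤ |X ω|} ≤ 2 * exp (-ε ^ 2 / (2 * c)) := by
  calc μ.real {ω | ε ≤ |X ω|} ≤ μ.real ({ω | ε ≤ X ω} ∪ {ω | ε ≤ (-X) ω}) :=
        measureReal_mono fun ω hω => by simpa [le_neg] using (le_abs'.mp hω).symm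
    _ ≤ 2 * exp (-ε ^ 2 / (2 * c)) := (measureReal_union_le _ _).trans
        (by linarith [h.measure_ge_le hε, h.neg.measure_ge_le hε])

variable {Ω : Type*} [MeasurableSpace Ω] {μ : Measure Ω}

lemma integral_ite_one_zero_of_measure_eq {X : Ω → Bool} (hX : Measurable X) {q : ℝ}
    (hq : 0 ≤ q) (hdist : μ {ω | X ω = true} = ENNReal.ofReal q) :
    μ[fun ω => if X ω = true then (1 : ℝ) else 0] = q := by
  have hB : (fun ω => if X ω = true then (1 : ℝ) else 0) =
      Set.indicator {ω | X ω = true} 1 := by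
    ext ω
    simp [Set.indicator_apply]
  rw [hB, integral_indicator_one (s := {ω | X ω = true}) (hX (measurableSet_singleton true)),
    measureReal_def, hdist, ENNReal.toReal_ofReal hq]

lemma measureReal_abs_freq_sub_ge_le [IsProbabilityMeasure μ] {N : ℕ} (hN : 0 < N)
    {X : Fin N → Ω → Bool} (hX : ∀ i, Measurable (X i)) (hind : iIndepFun X μ) {q : ℝ}
    (hq : 0 ≤ q) (hdist : ∀ i, μ {ω | X i ω = true} = ENNReal.ofReal q) {κ : ℝ}
    (hκ : 0 ≤ κ) :
    μ.real {ω | √(κ / N) ≤ |empiricalFreq (fun i => X i ω) - q|} ≤ 2 * exp (-2 * κ) := by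
  set B : Bool → ℝ := fun b => if b = true then 1 else 0
  have hNpos : (0 : ℝ) < N := Nat.cast_pos.mpr hN
  have hY : ∀ i,
      HasSubgaussianMGF (fun ω => B (X i ω) - q) ((‖(1 : ℝ) - 0‖₊ / 2) ^ 2) μ := by
    intro i
    have := hasSubgaussianMGF_of_mem_Icc (μ := μ) (X := fun ω => B (X i ω)) (a := 0)
      (b := 1)
      ((Measurable.of_discrete (f := B)).comp (hX i)).aemeasurable
      (ae_of_all _ fun ω => by cases X i ω <;> simp [B])
    rwa [integral_ite_one_zero_of_measure_eq (hX i) hq (hdist i)] at this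
  have hsum := HasSubgaussianMGF.sum_of_iIndepFun
    (hind.comp (fun _ b => B b - q) fun _ => Measurable.of_discrete) (s := Finset.univ)
    fun i _ => hY i
  have hsum_eq : ∀ ω, ∑ i, (B (X i ω) - q) = N * (empiricalFreq (fun i => X i ω) - q) :=
      fun ω => by
    simp [B, empiricalFreq, Finset.sum_sub_distrib, Finset.sum_boole]
    field_simp
  have hsqrt : √(κ * N) = N * √(κ / N) := by
    rw [show κ * N = N ^ 2 * (κ / N) by field_simp, sqrt_mul (sq_nonneg _), sqrt_sq hNpos.le]
  calc μ.real {ω | √(κ / N) ≤ |empiricalFreq (fun i => X i ω) - q|}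
      ≤ μ.real {ω | √(κ * N) ≤ |∑ i, (B (X i ω) - q)|} := by
        refine measureReal_mono fun ω hω => ?_
        simp only [Set.mem_ofPred_eq, hsum_eq, abs_mul, abs_of_pos hNpos, hsqrt] at hω ⊢
        exact mul_le_mul_of_nonneg_left hω hNpos.le
    _ ≤ _ := hsum.measureReal_abs_ge_le (sqrt_nonneg _)
    _ = 2 * exp (-2 * κ) := by
        rw [sq_sqrt (by positivity)]
        norm_num
        field_simp
        ring

end Hoeffding

section Perturbation

open Set

lemma div_add_mem_Icc_s3 {u v : ℝ} (hu : 0 ≤ u) (hv : 0 ≤ v) : u / (u + v) ∈ Icc 0 1 :=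
  ⟨div_nonneg hu (add_nonneg hu hv),
    div_le_one_of_le₀ (le_add_of_nonneg_right hv) (add_nonneg hu hv)⟩

lemma abs_div_add_sub_div_add_le_s3 {u v u' v' ε : ℝ} (hu : 0 ≤ u) (hv : 0 ≤ v) (huv : 0 < u + v)
    (hε : ε ≤ 1) (h : |u' - u| + |v' - v| ≤ ε / 4 * (u + v)) :
    |u' / (u' + v') - u / (u + v)| ≤ ε / 3 := by
  have hε0 : 0 ≤ ε := by nlinarith [abs_nonneg (u' - u), abs_nonneg (v' - v)]
  have hden : 3 / 4 * (u + v) ≤ u' + v' := by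
    nlinarith [neg_abs_le (u' - u), neg_abs_le (v' - v)]
  have hden0 : 0 < u' + v' := by linarith
  rw [div_sub_div _ _ hden0.ne' huv.ne', abs_div, abs_of_pos (mul_pos hden0 huv),
    div_le_iff₀ (mul_pos hden0 huv)]
  calc |u' * (u + v) - (u' + v') * u| = |(u' - u) * v - u * (v' - v)| := by ring_nf
    _ ≤ |u' - u| * v + u * |v' - v| :=
        (abs_sub _ _).trans_eq (by rw [abs_mul, abs_mul, abs_of_nonneg hu, abs_of_nonneg hv])
    _ ≤ (|u' - u| + |v' - v|) * (u + v) := by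
        nlinarith [abs_nonneg (u' - u), abs_nonneg (v' - v)]
    _ ≤ ε / 4 * (u + v) * (u + v) := by gcongr
    _ ≤ ε / 3 * ((u' + v') * (u + v)) := by
        nlinarith [mul_le_mul_of_nonneg_left hden (by positivity : 0 ≤ ε / 3 * (u + v))]

lemma abs_convex_comb_sub_le {r₁ r₂ s₁ s₂ S T η : ℝ} (hr₁ : r₁ ∈ Icc 0 1)
    (hr₂ : r₂ ∈ Icc 0 1) (hT : T ∈ Icc 0 1) (h₁ : |s₁ - r₁| ≤ η) (h₂ : |s₂ - r₂| ≤ η) :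
    |(s₁ * T + s₂ * (1 - T)) - (r₁ * S + r₂ * (1 - S))| ≤ η + |T - S| := by
  have hr : |r₁ - r₂| ≤ 1 :=
    abs_sub_le_iff.2 ⟨by linarith [hr₁.2, hr₂.1], by linarith [hr₁.1, hr₂.2]⟩
  have hT' : 0 ≤ 1 - T := sub_nonneg.2 hT.2
  calc |(s₁ * T + s₂ * (1 - T)) - (r₁ * S + r₂ * (1 - S))|
      = |(s₁ - r₁) * T + (s₂ - r₂) * (1 - T) + (r₁ - r₂) * (T - S)| := by ring_nf
    _ ≤ |s₁ - r₁| * T + |s₂ - r₂| * (1 - T) + |r₁ - r₂| * |T - S| := by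
        refine (abs_add_le _ _).trans
          (add_le_add ((abs_add_le _ _).trans ?_) (abs_mul _ _).le)
        rw [abs_mul, abs_mul, abs_of_nonneg hT.1, abs_of_nonneg hT']
    _ ≤ η * T + η * (1 - T) + 1 * |T - S| := by gcongr; exact hT.1
    _ = η + |T - S| := by ring

/-- The adjustment formula `P(Y = 1 | do(T = t)) = ∑_z P(Y = 1 | T = t, Z = z) P(Z = z)` for
one arm `T = t`, where `b = P(Y = 0, T = t)`, `c = P(Y = 1, T = t)`, `qb` and `qc` are the
conditional probabilities of `Z = 0` given these two outcomes, and `S = P(Z = 0)`. -/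
noncomputable def adjustedMean (b c qb qc S : ℝ) : ℝ :=
  c * qc / (c * qc + b * qb) * S + c * (1 - qc) / (c * (1 - qc) + b * (1 - qb)) * (1 - S)

lemma ATE_pOf_eq_adjustedMean_sub (a q : Fin 4 → ℝ) :
    ATE (pOf a q) = adjustedMean (a 1) (a 3) (q 1) (q 3) (∑ j, a j * q j)
      - adjustedMean (a 0) (a 2) (q 0) (q 2) (∑ j, a j * q j) := by
  simp [ATE, pOf, adjustedMean, Fin.sum_univ_four]
  ring

lemma abs_adjustedMean_sub_le {b c qb qc qb' qc' S S' ε : ℝ} (hb : 0 ≤ b) (hc : 0 ≤ c)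
    (hqb : qb ∈ Icc 0 1) (hqc : qc ∈ Icc 0 1) (hε₀ : 0 ≤ ε) (hε₁ : ε ≤ 1)
    (hS' : S' ∈ Icc 0 1)
    (h₀ : 0 < b * qb + c * qc) (h₁ : 0 < b * (1 - qb) + c * (1 - qc))
    (hdev : b * |qb' - qb| + c * |qc' - qc| ≤
      ε / 4 * min (b * qb + c * qc) (b * (1 - qb) + c * (1 - qc))) :
    |adjustedMean b c qb' qc' S' - adjustedMean b c qb qc S| ≤ ε / 3 + |S' - S| := by
  have hqb' : 0 ≤ 1 - qb := sub_nonneg.2 hqb.2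
  have hqc' : 0 ≤ 1 - qc := sub_nonneg.2 hqc.2
  have hscale : ∀ x x' y y' : ℝ,
      |c * y' - c * y| + |b * x' - b * x| = b * |x' - x| + c * |y' - y| := fun x x' y y' => by
    rw [← mul_sub, ← mul_sub, abs_mul, abs_mul, abs_of_nonneg hb, abs_of_nonneg hc, add_comm]
  have hdev₁ : b * |(1 - qb') - (1 - qb)| + c * |(1 - qc') - (1 - qc)| ≤
      ε / 4 * min (b * qb + c * qc) (b * (1 - qb) + c * (1 - qc)) := by
    rwa [sub_sub_sub_cancel_left, sub_sub_sub_cancel_left, abs_sub_comm qb, abs_sub_comm qc]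
  have hu₀ := mul_nonneg hc hqc.1
  have hv₀ := mul_nonneg hb hqb.1
  have hu₁ := mul_nonneg hc hqc'
  have hv₁ := mul_nonneg hb hqb'
  refine abs_convex_comb_sub_le (div_add_mem_Icc_s3 hu₀ hv₀) (div_add_mem_Icc_s3 hu₁ hv₁) hS'
    (abs_div_add_sub_div_add_le_s3 hu₀ hv₀ (by linarith) hε₁ ?_)
    (abs_div_add_sub_div_add_le_s3 hu₁ hv₁ (by linarith) hε₁ ?_)
  · rw [hscale, add_comm (c * qc)]
    exact hdev.trans (mul_le_mul_of_nonneg_left (min_le_left _ _) (by positivity))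
  · rw [hscale, add_comm (c * (1 - qc))]
    exact hdev₁.trans (mul_le_mul_of_nonneg_left (min_le_right _ _) (by positivity))

lemma abs_ATE_pOf_sub_lt {a q q' t : Fin 4 → ℝ} {ε : ℝ} (ha : ∀ j, 0 ≤ a j)
    (hasum : ∑ j, a j = 1) (hq : ∀ j, q j ∈ Icc 0 1) (hq' : ∀ j, q' j ∈ Icc 0 1)
    (hε₀ : 0 < ε) (hε₁ : ε ≤ 1)
    (h37 : 0 < pOf a q 2 + pOf a q 6) (h48 : 0 < pOf a q 3 + pOf a q 7)
    (h15 : 0 < pOf a q 0 + pOf a q 4) (h26 : 0 < pOf a q 1 + pOf a q 5)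
    (hdev : ∀ j, |q' j - q j| ≤ t j)
    (ht₁ : a 1 * t 1 + a 3 * t 3 ≤
      ε / 4 * min (pOf a q 2 + pOf a q 6) (pOf a q 3 + pOf a q 7))
    (ht₀ : a 0 * t 0 + a 2 * t 2 ≤
      ε / 4 * min (pOf a q 0 + pOf a q 4) (pOf a q 1 + pOf a q 5)) :
    |ATE (pOf a q') - ATE (pOf a q)| < ε := by
  have hdev₁ : a 1 * |q' 1 - q 1| + a 3 * |q' 3 - q 3| ≤ a 1 * t 1 + a 3 * t 3 := by
    gcongr <;> [exact ha 1; exact hdev 1; exact ha 3; exact hdev 3]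
  have hdev₀ : a 0 * |q' 0 - q 0| + a 2 * |q' 2 - q 2| ≤ a 0 * t 0 + a 2 * t 2 := by
    gcongr <;> [exact ha 0; exact hdev 0; exact ha 2; exact hdev 2]
  set S := ∑ j, a j * q j
  set S' := ∑ j, a j * q' j
  have hS' : S' ∈ Icc 0 1 :=
    ⟨Finset.sum_nonneg fun j _ => mul_nonneg (ha j) (hq' j).1,
      hasum ▸ Finset.sum_le_sum fun j _ => mul_le_of_le_one_right (ha j) (hq' j).2⟩
  have hmin : ∀ u v : ℝ, min u v ≤ (u + v) / 2 := fun u v => by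
    linarith [min_le_left u v, min_le_right u v]
  have hSS : |S' - S| ≤ ε / 8 := by
    calc |S' - S| = |∑ j, a j * (q' j - q j)| := by
          simp only [S, S', mul_sub, Finset.sum_sub_distrib]
      _ ≤ ∑ j, a j * |q' j - q j| := (Finset.abs_sum_le_sum_abs _ _).trans_eq
          (Finset.sum_congr rfl fun j _ => by rw [abs_mul, abs_of_nonneg (ha j)])
      _ = (a 0 * |q' 0 - q 0| + a 2 * |q' 2 - q 2|)
          + (a 1 * |q' 1 - q 1| + a 3 * |q' 3 - q 3|) := by
          rw [Fin.sum_univ_four]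
          ring
      _ ≤ ε / 4 * ((pOf a q 0 + pOf a q 4 + (pOf a q 1 + pOf a q 5)) / 2)
          + ε / 4 * ((pOf a q 2 + pOf a q 6 + (pOf a q 3 + pOf a q 7)) / 2) := by
          gcongr
          · exact hdev₀.trans (ht₀.trans (by gcongr; exact hmin _ _))
          · exact hdev₁.trans (ht₁.trans (by gcongr; exact hmin _ _))
      _ = ε / 8 := by
          rw [Fin.sum_univ_four] at hasum
          simp [pOf]
          linear_combination ε / 8 * hasum
  have h₁ := abs_adjustedMean_sub_le (S := S) (ha 1) (ha 3) (hq 1) (hq 3) hε₀.le hε₁ hS'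
    h37 h48 (hdev₁.trans ht₁)
  have h₀ := abs_adjustedMean_sub_le (S := S) (ha 0) (ha 2) (hq 0) (hq 2) hε₀.le hε₁ hS'
    h15 h26 (hdev₀.trans ht₀)
  rw [ATE_pOf_eq_adjustedMean_sub, ATE_pOf_eq_adjustedMean_sub, sub_sub_sub_comm]
  calc _ ≤ _ := abs_sub _ _
    _ ≤ 2 * (ε / 3 + ε / 8) := by linarith
    _ < ε := by linarith

end Perturbation

section Allocation

open Real

lemma Real.sqrt_add_sqrt_le {x y : ℝ} (hx : 0 ≤ x) (hy : 0 ≤ y) : √x + √y ≤ √(2 * (x + y)) :=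
  le_sqrt_of_sq_le <| (add_sq_le (a := √x) (b := √y)).trans_eq (by rw [sq_sqrt hx, sq_sqrt hy])

lemma mul_sqrt_div_add_mul_sqrt_div_le {a₁ a₂ m κ : ℝ} (ha₁ : 0 ≤ a₁) (ha₂ : 0 ≤ a₂)
    (hs : 0 < a₁ + a₂) (hm : 0 ≤ m) (hκ : 0 ≤ κ) :
    a₁ * √(κ / (a₁ / (2 * (a₁ + a₂)) * m)) + a₂ * √(κ / (a₂ / (2 * (a₁ + a₂)) * m))
      ≤ 2 * (a₁ + a₂) * √(κ / m) := by
  have hc : 0 ≤ 2 * (a₁ + a₂) * κ / m := by positivity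
  have key : ∀ x, 0 ≤ x →
      x * √(κ / (x / (2 * (a₁ + a₂)) * m)) = √(2 * (a₁ + a₂) * κ / m * x) := by
    intro x hx
    rcases hx.eq_or_lt with rfl | hx
    · simp
    rw [show 2 * (a₁ + a₂) * κ / m * x = x ^ 2 * (κ / (x / (2 * (a₁ + a₂)) * m)) by
      field_simp, sqrt_mul (sq_nonneg x), sqrt_sq hx.le]
  rw [key a₁ ha₁, key a₂ ha₂]
  refine (sqrt_add_sqrt_le (mul_nonneg hc ha₁) (mul_nonneg hc ha₂)).trans_eq ?_
  rw [show 2 * (2 * (a₁ + a₂) * κ / m * a₁ + 2 * (a₁ + a₂) * κ / m * a₂)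
      = (2 * (a₁ + a₂)) ^ 2 * (κ / m) by ring, sqrt_mul (sq_nonneg _), sqrt_sq (by positivity)]

lemma two_mul_sqrt_le_of_sample_size {s u v m L ε : ℝ} (hs : 0 < s) (hL : 0 < L) (hu : 0 < u)
    (hv : 0 < v) (hε : 0 < ε) (hm : 18 * L / ε ^ 2 * (2 * s ^ 2 / min (u ^ 2) (v ^ 2)) ≤ m) :
    2 * s * √(9 * L / 16 / m) ≤ ε / 4 * min u v := by
  have hmin : min (u ^ 2) (v ^ 2) = min u v ^ 2 := by
    rcases le_total u v with h | h
    · rw [min_eq_left h, min_eq_left (by gcongr)]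
    · rw [min_eq_right h, min_eq_right (by gcongr)]
  have hD : 0 < min u v := lt_min hu hv
  rw [hmin] at hm
  have hm₀ : 0 < m := lt_of_lt_of_le (by positivity) hm
  have hm' : 36 * L * s ^ 2 ≤ m * (ε ^ 2 * min u v ^ 2) := by
    rwa [show 18 * L / ε ^ 2 * (2 * s ^ 2 / min u v ^ 2)
      = 36 * L * s ^ 2 / (ε ^ 2 * min u v ^ 2) by field_simp; ring,
      div_le_iff₀ (by positivity)] at hm
  calc 2 * s * √(9 * L / 16 / m) = √((2 * s) ^ 2 * (9 * L / 16 / m)) := by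
        rw [sqrt_mul (sq_nonneg _), sqrt_sq (by positivity)]
    _ ≤ √((ε / 4 * min u v) ^ 2) := by
        refine sqrt_le_sqrt (sub_nonneg.1 ?_)
        rw [show (ε / 4 * min u v) ^ 2 - (2 * s) ^ 2 * (9 * L / 16 / m)
          = (m * (ε ^ 2 * min u v ^ 2) - 36 * L * s ^ 2) / (16 * m) by field_simp; ring]
        exact div_nonneg (sub_nonneg.2 hm') (by positivity)
    _ = ε / 4 * min u v := sqrt_sq (by positivity)

lemma mul_sqrt_add_mul_sqrt_le_of_allocation {a₁ a₂ n₁ n₂ m u v L ε : ℝ} (ha₁ : 0 ≤ a₁)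
    (ha₂ : 0 ≤ a₂) (hs : 0 < a₁ + a₂) (hL : 0 < L) (hu : 0 < u) (hv : 0 < v) (hε : 0 < ε)
    (hn₁ : n₁ = a₁ / (2 * (a₁ + a₂)) * m) (hn₂ : n₂ = a₂ / (2 * (a₁ + a₂)) * m)
    (hm : 18 * L / ε ^ 2 * (2 * (a₁ + a₂) ^ 2 / min (u ^ 2) (v ^ 2)) ≤ m) :
    a₁ * √(9 * L / 16 / n₁) + a₂ * √(9 * L / 16 / n₂) ≤ ε / 4 * min u v := by
  have hm₀ : 0 ≤ m := le_trans (by positivity) hm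
  rw [hn₁, hn₂]
  exact (mul_sqrt_div_add_mul_sqrt_div_le ha₁ ha₂ hs hm₀ (by positivity)).trans
    (two_mul_sqrt_le_of_sample_size hs hL hu hv hε hm)

lemma eight_mul_exp_lt {δ : ℝ} (hδ₀ : 0 < δ) (hδ₁ : δ < 8) :
    8 * exp (-2 * (9 * log (8 / δ) / 16)) < δ := by
  have hL : 0 < log (8 / δ) := log_pos (by rw [lt_div_iff₀ hδ₀]; linarith)
  calc 8 * exp (-2 * (9 * log (8 / δ) / 16)) < 8 * exp (-log (8 / δ)) := by
        gcongr
        linarith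
    _ = δ := by
        rw [exp_neg, exp_log (by positivity), inv_div]
        field_simp

end Allocation

/-- Sample complexity for estimating the ATE with infinite observational data,
sampling the experimental data according to the predefined ratio
`(x_1,x_2,x_3,x_4) = (a_1/(2(a_1+a_3)), a_2/(2(a_2+a_4)), a_3/(2(a_1+a_3)),
a_4/(2(a_2+a_4)))` (Theorem 2, third bullet). -/
theorem ate_sample_complexity_sampling_by_ratio
    {Ω : Type*} [MeasurableSpace Ω] (μ : Measure Ω) [IsProbabilityMeasure μ]
    (a q : Fin 4 → ℝ) (ha : ∀ j, 0 ≤ a j) (hasum : ∑ j, a j = 1)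
    (hq0 : ∀ j, 0 ≤ q j) (hq1 : ∀ j, q j ≤ 1)
    (ha13 : 0 < a 0 + a 2) (ha24 : 0 < a 1 + a 3)
    (m : ℕ) (n : Fin 4 → ℕ) (hn : ∀ j, 0 < n j)
    -- allocation according to the predefined ratio
    (halloc1 : (n 0 : ℝ) = a 0 / (2 * (a 0 + a 2)) * m)
    (halloc2 : (n 1 : ℝ) = a 1 / (2 * (a 1 + a 3)) * m)
    (halloc3 : (n 2 : ℝ) = a 2 / (2 * (a 0 + a 2)) * m)
    (halloc4 : (n 3 : ℝ) = a 3 / (2 * (a 1 + a 3)) * m)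
    (W : (j : Fin 4) → Fin (n j) → Ω → Bool)
    (hWmeas : ∀ j i, Measurable (W j i))
    (hindep : iIndepFun
      (fun k : Σ j : Fin 4, Fin (n j) => W k.1 k.2) μ)
    (hdist : ∀ j i, μ {ω | W j i ω = true} = ENNReal.ofReal (q j))
    (ε δ : ℝ) (hε0 : 0 < ε) (hε1 : ε ≤ 1) (hδ0 : 0 < δ) (hδ1 : δ < 1)
    (h37 : 0 < pOf a q 2 + pOf a q 6) (h48 : 0 < pOf a q 3 + pOf a q 7)
    (h15 : 0 < pOf a q 0 + pOf a q 4) (h26 : 0 < pOf a q 1 + pOf a q 5)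
    (hm : (m : ℝ) ≥ 18 * Real.log (8 / δ) / ε ^ 2 *
      max (2 * (a 1 + a 3) ^ 2 /
            min ((pOf a q 2 + pOf a q 6) ^ 2) ((pOf a q 3 + pOf a q 7) ^ 2))
          (2 * (a 0 + a 2) ^ 2 /
            min ((pOf a q 0 + pOf a q 4) ^ 2) ((pOf a q 1 + pOf a q 5) ^ 2))) :
    μ {ω | ε ≤
        |ATE (pOf a (fun j =>
            ((Finset.univ.filter fun i => W j i ω = true).card : ℝ) / n j)) -
          ATE (pOf a q)|}
      < ENNReal.ofReal δ := by
  set L := Real.log (8 / δ)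
  have hL : 0 < L := Real.log_pos (by rw [lt_div_iff₀ hδ0]; linarith)
  have hcoef : 0 ≤ 18 * L / ε ^ 2 := by positivity
  have ht₁ := mul_sqrt_add_mul_sqrt_le_of_allocation (ha 1) (ha 3) ha24 hL h37 h48 hε0 halloc2
    halloc4 ((mul_le_mul_of_nonneg_left (le_max_left _ _) hcoef).trans hm)
  have ht₀ := mul_sqrt_add_mul_sqrt_le_of_allocation (ha 0) (ha 2) ha13 hL h15 h26 hε0 halloc1
    halloc3 ((mul_le_mul_of_nonneg_left (le_max_right _ _) hcoef).trans hm)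
  set κ := 9 * L / 16
  set qhat : Ω → Fin 4 → ℝ := fun ω j => empiricalFreq fun i => W j i ω
  have hsub : {ω | ε ≤ |ATE (pOf a (qhat ω)) - ATE (pOf a q)|}
      ⊆ ⋃ j, {ω | √(κ / n j) ≤ |qhat ω j - q j|} := by
    intro ω hω
    by_contra hgood
    simp only [Set.mem_iUnion, Set.mem_ofPred_eq, not_exists, not_le] at hgood
    exact (abs_ATE_pOf_sub_lt ha hasum (fun j => ⟨hq0 j, hq1 j⟩)
      (fun j => empiricalFreq_mem_Icc _) hε0 hε1 h37 h48 h15 h26 (fun j => (hgood j).le)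
      ht₁ ht₀).not_ge hω
  change μ {ω | ε ≤ |ATE (pOf a (qhat ω)) - ATE (pOf a q)|} < _
  rw [← ofReal_measureReal, ENNReal.ofReal_lt_ofReal_iff hδ0]
  calc _ ≤ ∑ j, μ.real {ω | √(κ / n j) ≤ |qhat ω j - q j|} :=
        (measureReal_mono hsub).trans (measureReal_iUnion_fintype_le _)
    _ ≤ ∑ _j : Fin 4, 2 * Real.exp (-2 * κ) := Finset.sum_le_sum fun j _ =>
        measureReal_abs_freq_sub_ge_le (hn j) (hWmeas j)
          (hindep.precomp (g := Sigma.mk j) sigma_mk_injective) (hq0 j) (hdist j) (by positivity)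
    _ = 8 * Real.exp (-2 * κ) := by
        rw [Finset.sum_const, Finset.card_univ, Fintype.card_fin, nsmul_eq_mul]
        ring
    _ < δ := eight_mul_exp_lt hδ0 (by linarith)
end
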